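/- arXiv:2108.00259 — 5 statements merged into one kernel-verified Lean document; each statement's English description precedes it below -/
import Mathlib

section
/- For every integer k ≥ 2, one step of greedy forward selection satisfies the descent inequality ℓ(u_k) ≤ (1 − 1/k)·ℓ(u_{k−1}) + (1/k)·L_N + (1/k²)·D². -/
/-!
Since `z_{k-1} = (k-1) u_{k-1}`, each candidate of step `k` is the convex combination
`(1 - γ) u_{k-1} + γ Φ_i` with `γ = 1/k`, and the greedy choice is no worse than the average
of the candidates. For the quadratic loss that average splits, as for a variance, into the loss
at the mean candidate `(1 - γ) u_{k-1} + γ Φ̄` plus `γ²/2` times the mean of `‖Φ_i - Φ̄‖²`.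
Convexity bounds the first term by `(1 - γ) ℓ(u_{k-1}) + γ L_N`; the second is at most
`γ² D² / 2`, because `Φ̄` lies in the marginal polytope.
-/

open Finset

section InnerProductSpace

variable {ι E : Type*} [NormedAddCommGroup E] [InnerProductSpace ℝ E]

lemma inv_add_one_smul_smul_add {t : ℝ} (ht : t + 1 ≠ 0) (a b : E) :
    (t + 1)⁻¹ • (t • a + b) = (1 - (t + 1)⁻¹) • a + (t + 1)⁻¹ • b := by
  match_scalars <;> field_simp; ring

lemma sum_norm_add_sq_of_sum_eq_zero {s : Finset ι} {d : ι → E} (hd : ∑ i ∈ s, d i = 0)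
    (x : E) : ∑ i ∈ s, ‖x + d i‖ ^ 2 = #s * ‖x‖ ^ 2 + ∑ i ∈ s, ‖d i‖ ^ 2 := by
  simp only [norm_add_sq_real, sum_add_distrib, ← mul_sum, ← inner_sum, hd, inner_zero_right,
    sum_const, nsmul_eq_mul]
  ring

variable [Fintype ι]

lemma sum_sub_mean_eq_zero (v : ι → E) :
    ∑ i, (v i - (Fintype.card ι : ℝ)⁻¹ • ∑ j, v j) = 0 := by
  rcases isEmpty_or_nonempty ι with hι | hι
  · simp
  rw [sum_sub_distrib, sum_const, card_univ, ← Nat.cast_smul_eq_nsmul ℝ, smul_smul,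
    mul_inv_cancel₀ (by exact_mod_cast Fintype.card_ne_zero), one_smul, sub_self]

lemma mean_mem_convexHull [Nonempty ι] (v : ι → E) :
    (Fintype.card ι : ℝ)⁻¹ • ∑ i, v i ∈ convexHull ℝ (Set.range v) := by
  simpa [centerMass] using
    univ.centerMass_mem_convexHull (w := fun _ ↦ (1 : ℝ)) (fun _ _ ↦ zero_le_one)
      (by simp [Fintype.card_pos]) (fun i _ ↦ Set.mem_range_self (f := v) i)

/-- The parallel-axis identity for the points `x + c • v i`. -/
lemma sum_norm_add_smul_sq (v : ι → E) (x : E) (c : ℝ) :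
    ∑ i, ‖x + c • v i‖ ^ 2
      = Fintype.card ι * ‖x + c • ((Fintype.card ι : ℝ)⁻¹ • ∑ j, v j)‖ ^ 2
        + c ^ 2 * ∑ i, ‖v i - (Fintype.card ι : ℝ)⁻¹ • ∑ j, v j‖ ^ 2 := by
  set μ := (Fintype.card ι : ℝ)⁻¹ • ∑ j, v j
  have hd : ∑ i, c • (v i - μ) = 0 := by rw [← smul_sum, sum_sub_mean_eq_zero, smul_zero]
  calc ∑ i, ‖x + c • v i‖ ^ 2 = ∑ i, ‖(x + c • μ) + c • (v i - μ)‖ ^ 2 := by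
        congr! 3; rw [smul_sub]; abel
    _ = _ := by
        rw [sum_norm_add_sq_of_sum_eq_zero hd, card_univ, mul_sum]
        simp only [norm_smul, mul_pow, Real.norm_eq_abs, sq_abs]

lemma norm_sq_convex_comb_le {γ : ℝ} (hγ₀ : 0 ≤ γ) (hγ₁ : γ ≤ 1) (a b : E) :
    ‖(1 - γ) • a + γ • b‖ ^ 2 ≤ (1 - γ) * ‖a‖ ^ 2 + γ * ‖b‖ ^ 2 :=
  (convexOn_univ_norm.pow (fun _ _ ↦ norm_nonneg _) 2).2 trivial trivial
    (sub_nonneg.2 hγ₁) hγ₀ (sub_add_cancel 1 γ)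

lemma norm_sub_sq_le_of_forall_le [Nonempty ι] {v : ι → E} {a y w : E} {γ D : ℝ}
    (hγ₀ : 0 ≤ γ) (hγ₁ : γ ≤ 1)
    (hw : ∀ i, ‖w - y‖ ^ 2 ≤ ‖(1 - γ) • a + γ • v i - y‖ ^ 2)
    (hD : ∀ i, ‖v i - (Fintype.card ι : ℝ)⁻¹ • ∑ j, v j‖ ≤ D) :
    ‖w - y‖ ^ 2 ≤ (1 - γ) * ‖a - y‖ ^ 2
      + γ * ‖(Fintype.card ι : ℝ)⁻¹ • ∑ j, v j - y‖ ^ 2 + γ ^ 2 * D ^ 2 := by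
  set μ := (Fintype.card ι : ℝ)⁻¹ • ∑ j, v j
  have hcard : (0 : ℝ) < Fintype.card ι := by exact_mod_cast Fintype.card_pos
  have hmean : Fintype.card ι * ‖w - y‖ ^ 2 ≤ ∑ i, ‖((1 - γ) • a - y) + γ • v i‖ ^ 2 := by
    simpa [sub_add_eq_add_sub] using card_nsmul_le_sum univ _ _ fun i _ ↦ hw i
  have hcenter : ((1 - γ) • a - y) + γ • μ = (1 - γ) • (a - y) + γ • (μ - y) := by
    simp only [smul_sub, sub_smul, one_smul]; abel
  have hvar : ∑ i, ‖v i - μ‖ ^ 2 ≤ Fintype.card ι * D ^ 2 := by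
    simpa using sum_le_sum fun i (_ : i ∈ univ) ↦ pow_le_pow_left₀ (norm_nonneg _) (hD i) 2
  rw [sum_norm_add_smul_sq, hcenter] at hmean
  have hconv := norm_sq_convex_comb_le hγ₀ hγ₁ (a - y) (μ - y)
  have hγvar := mul_le_mul_of_nonneg_left hvar (sq_nonneg γ)
  refine le_of_mul_le_mul_left ?_ hcard
  linarith [mul_le_mul_of_nonneg_left hconv hcard.le]

end InnerProductSpace

theorem greedy_forward_selection_descent_step_general
    (m N : ℕ)
    (Φ : Fin N → EuclideanSpace ℝ (Fin m)) (y : EuclideanSpace ℝ (Fin m))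
    (ℓ : EuclideanSpace ℝ (Fin m) → ℝ)
    (hℓ : ∀ z, ℓ z = (1/2) * ‖z - y‖^2)
    (D : ℝ)
    (hD : ∀ u ∈ convexHull ℝ (Set.range Φ), ∀ v ∈ convexHull ℝ (Set.range Φ),
      ‖u - v‖ ≤ D)
    (z u : ℕ → EuclideanSpace ℝ (Fin m))
    (hgreedy : ∀ k : ℕ, ∃ j : Fin N, z (k + 1) = z k + Φ j ∧
      ∀ i : Fin N, ℓ (((k : ℝ) + 1)⁻¹ • (z k + Φ j)) ≤ ℓ (((k : ℝ) + 1)⁻¹ • (z k + Φ i)))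
    (hu : ∀ k : ℕ, u (k + 1) = ((k : ℝ) + 1)⁻¹ • z (k + 1))
    (k : ℕ) (hk : 2 ≤ k) :
    ℓ (u k) ≤ (1 - 1 / (k : ℝ)) * ℓ (u (k - 1)) + (1 / (k : ℝ)) * ℓ ((N : ℝ)⁻¹ • ∑ i : Fin N, Φ i)
      + (1 / (k : ℝ) ^ 2) * D ^ 2 := by
  obtain ⟨n, rfl⟩ : ∃ n, k = n + 2 := ⟨k - 2, by omega⟩
  obtain ⟨j, hzj, hmin⟩ := hgreedy (n + 1)
  have : Nonempty (Fin N) := ⟨j⟩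
  set γ : ℝ := (((n + 1 : ℕ) : ℝ) + 1)⁻¹ with hγ
  have hγ₀ : 0 ≤ γ := by positivity
  have hγ₁ : γ ≤ 1 := inv_le_one_of_one_le₀ (le_add_of_nonneg_left (Nat.cast_nonneg _))
  have hz : z (n + 1) = ((n + 1 : ℕ) : ℝ) • u (n + 1) := by
    rw [hu n, smul_smul, Nat.cast_succ, mul_inv_cancel₀ (by positivity), one_smul]
  have hcandidate (i : Fin N) : γ • (z (n + 1) + Φ i) = (1 - γ) • u (n + 1) + γ • Φ i := by
    rw [hz]; exact inv_add_one_smul_smul_add (by positivity) _ _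
  have hstep : u (n + 2) = γ • (z (n + 1) + Φ j) := by rw [hu (n + 1), hzj]
  have hdescent := norm_sub_sq_le_of_forall_le (w := u (n + 2)) (y := y) (D := D) hγ₀ hγ₁
    (fun i ↦ by simpa [hℓ, ← hstep, hcandidate] using hmin i)
    (fun i ↦ hD _ (subset_convexHull ℝ _ ⟨i, rfl⟩) _ (mean_mem_convexHull Φ))
  rw [Fintype.card_fin] at hdescent
  have hγk : 1 / ((n + 2 : ℕ) : ℝ) = γ := by rw [hγ]; push_cast; ring
  rw [← one_div_pow, hγk, show n + 2 - 1 = n + 1 from rfl, hℓ, hℓ, hℓ]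
  linarith [mul_nonneg (sq_nonneg γ) (sq_nonneg D)]

/-- **One-step descent inequality for greedy forward selection.**
For every integer `k ≥ 2`,
`ℓ(u_k) ≤ (1 − 1/k)·ℓ(u_{k−1}) + (1/k)·L_N + (1/k²)·D²`,
where `L_N = ℓ((1/N) ∑ᵢ Φᵢ)` is the loss of the dense two-layer network. -/
theorem greedy_forward_selection_descent_step
    (m N : ℕ) (hN : 0 < N)
    (Φ : Fin N → EuclideanSpace ℝ (Fin m)) (y : EuclideanSpace ℝ (Fin m))
    (ℓ : EuclideanSpace ℝ (Fin m) → ℝ)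
    (hℓ : ∀ z, ℓ z = (1/2) * ‖z - y‖^2)
    (D : ℝ) (hD0 : 0 ≤ D)
    (hD : ∀ u ∈ convexHull ℝ (Set.range Φ), ∀ v ∈ convexHull ℝ (Set.range Φ),
      ‖u - v‖ ≤ D)
    (z u : ℕ → EuclideanSpace ℝ (Fin m))
    (hz0 : z 0 = 0)
    (hgreedy : ∀ k : ℕ, ∃ j : Fin N, z (k + 1) = z k + Φ j ∧
      ∀ i : Fin N, ℓ (((k : ℝ) + 1)⁻¹ • (z k + Φ j)) ≤ ℓ (((k : ℝ) + 1)⁻¹ • (z k + Φ i)))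
    (hu : ∀ k : ℕ, u (k + 1) = ((k : ℝ) + 1)⁻¹ • z (k + 1))
    (k : ℕ) (hk : 2 ≤ k) :
    ℓ (u k) ≤ (1 - 1 / (k : ℝ)) * ℓ (u (k - 1)) + (1 / (k : ℝ)) * ℓ ((N : ℝ)⁻¹ • ∑ i : Fin N, Φ i)
      + (1 / (k : ℝ) ^ 2) * D ^ 2 :=
  greedy_forward_selection_descent_step_general m N Φ y ℓ hℓ D hD z u hgreedy hu k hk
end

section
/- Let β > 0 and C > 0 be real constants, and let (a_k)_{k ≥ 0} be a sequence of real numbers with a_0 = 0 such that |a_{k+1}|² ≤ |a_k|² − 2β|a_k| + C for all k ≥ 0. Then |a_k| ≤ max(√C, C/2, C/(2β)) for all k ≥ 0. -/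
/-!
Put `M := max (√C) (max (C / 2) (C / (2β)))`, so that `C ≤ M²` and `C ≤ 2βM`. The bound
`|a_k| ≤ M` is then preserved by the recursion: the convex function `x ↦ x² - 2βx + C` is at most
`M²` on `[0, M]`, because its values at the endpoints are `C ≤ M²` and `M² - 2βM + C ≤ M²`.
-/

lemma sq_sub_two_mul_add_le_sq {β C M x : ℝ} (hx : 0 ≤ x) (hxM : x ≤ M)
    (hCM : C ≤ M ^ 2) (hCβ : C ≤ 2 * β * M) : x ^ 2 - 2 * β * x + C ≤ M ^ 2 := by
  rcases le_or_gt x (2 * β) with hxβ | hβx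
  · nlinarith [mul_nonneg hx (sub_nonneg.2 hxβ)]
  · have hmono : x ^ 2 - 2 * β * x ≤ M ^ 2 - 2 * β * M := by
      nlinarith [mul_nonneg (sub_nonneg.2 hxM) (by linarith : (0 : ℝ) ≤ M + x - 2 * β)]
    linarith

lemma abs_le_of_sq_abs_succ_le {β C M : ℝ} {a : ℕ → ℝ} (h0 : |a 0| ≤ M)
    (hCM : C ≤ M ^ 2) (hCβ : C ≤ 2 * β * M)
    (hrec : ∀ k, |a (k + 1)| ^ 2 ≤ |a k| ^ 2 - 2 * β * |a k| + C) (k : ℕ) : |a k| ≤ M := by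
  induction k with
  | zero => exact h0
  | succ k ih =>
    have hM : 0 ≤ M := (abs_nonneg _).trans ih
    exact (pow_le_pow_iff_left₀ (abs_nonneg _) hM two_ne_zero).1
      ((hrec k).trans (sq_sub_two_mul_add_le_sq (abs_nonneg _) ih hCM hCβ))

theorem recursive_sequence_bound_general
    (β C : ℝ) (hβ : 0 < β)
    (a : ℕ → ℝ) (ha0 : a 0 = 0)
    (hrec : ∀ k : ℕ, |a (k + 1)| ^ 2 ≤ |a k| ^ 2 - 2 * β * |a k| + C) :
    ∀ k : ℕ, |a k| ≤ max (Real.sqrt C) (max (C / 2) (C / (2 * β))) := by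
  set M := max (Real.sqrt C) (max (C / 2) (C / (2 * β)))
  have hsqrt : Real.sqrt C ≤ M := le_max_left _ _
  have hM : 0 ≤ M := (Real.sqrt_nonneg C).trans hsqrt
  have hCM : C ≤ M ^ 2 := (Real.sqrt_le_iff.1 hsqrt).2
  have hCβ : C ≤ 2 * β * M := by
    have h : C / (2 * β) ≤ M := (le_max_right _ _).trans (le_max_right _ _)
    rwa [div_le_iff₀' (by positivity)] at h
  exact abs_le_of_sq_abs_succ_le (by simpa [ha0] using hM) hCM hCβ hrec

/-- **Recursive sequence bound (Lemma A.4).**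
If `a_0 = 0` and `|a_{k+1}|² ≤ |a_k|² − 2β|a_k| + C` for all `k ≥ 0`, with `β, C > 0`,
then `|a_k| ≤ max(√C, C/2, C/(2β))` for all `k ≥ 0`. -/
theorem recursive_sequence_bound
    (β C : ℝ) (hβ : 0 < β) (hC : 0 < C)
    (a : ℕ → ℝ) (ha0 : a 0 = 0)
    (hrec : ∀ k : ℕ, |a (k + 1)| ^ 2 ≤ |a k| ^ 2 - 2 * β * |a k| + C) :
    ∀ k : ℕ, |a k| ≤ max (Real.sqrt C) (max (C / 2) (C / (2 * β))) :=
  recursive_sequence_bound_general β C hβ a ha0 hrec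
end

section
/- Suppose γ > 0 and the closed Euclidean ball B(y, γ) = {v ∈ ℝ^m : ‖v − y‖ ≤ γ} is contained in M_N. Define w_k = k·y − z_k (so w_k = k(y − u_k) and w_0 = 0). Then for every integer k ≥ 1, the greedy forward selection iterates satisfy ‖w_k‖² ≤ ‖w_{k−1}‖² − 2γ·‖w_{k−1}‖ + D². -/
/-!
The greedy loss of the candidate `Φ i` at step `k + 1` is `‖w k + (y - Φ i)‖² / (2 (k + 1)²)`,
so the greedy step minimizes `‖w k + (y - Φ i)‖` over `i`. Expanding,
`‖w + (y - x)‖² = ‖w‖² - 2⟪w, x - y⟫ + ‖y - x‖²`, and the linear functional `⟪w, ·⟫` is at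
least as large at some vertex `Φ i` as at the point `y + γ • w / ‖w‖` of the ball, which lies
in the hull; there it exceeds `⟪w, y⟫` by `γ ‖w‖`.
-/

open scoped RealInnerProductSpace

open Metric

section

variable {E : Type*} [NormedAddCommGroup E] [InnerProductSpace ℝ E]

theorem exists_inner_ge_of_mem_convexHull {s : Set E} {v : E} (hv : v ∈ convexHull ℝ s)
    (w : E) : ∃ x ∈ s, ⟪w, v⟫ ≤ ⟪w, x⟫ :=
  ((innerₗ E w).convexOn convex_univ).exists_ge_of_mem_convexHull (Set.subset_univ s) hv

theorem exists_mem_closedBall_inner_sub_eq (y w : E) {γ : ℝ} (hγ : 0 ≤ γ) :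
    ∃ v ∈ closedBall y γ, ⟪w, v - y⟫ = γ * ‖w‖ := by
  rcases eq_or_ne w 0 with rfl | hw
  · exact ⟨y, mem_closedBall_self hγ, by simp⟩
  have hw' : ‖w‖ ≠ 0 := norm_ne_zero_iff.mpr hw
  refine ⟨y + (γ / ‖w‖) • w, ?_, ?_⟩
  · rw [mem_closedBall, dist_eq_norm, add_sub_cancel_left, norm_smul, Real.norm_eq_abs,
      abs_of_nonneg (by positivity), div_mul_cancel₀ _ hw']
  · rw [add_sub_cancel_left, real_inner_smul_right, real_inner_self_eq_norm_sq]
    field_simp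

theorem exists_inner_sub_ge_of_closedBall_subset_convexHull {s : Set E} {y : E} {γ : ℝ}
    (hγ : 0 ≤ γ) (hball : closedBall y γ ⊆ convexHull ℝ s) (w : E) :
    ∃ x ∈ s, γ * ‖w‖ ≤ ⟪w, x - y⟫ := by
  obtain ⟨v, hv, hvw⟩ := exists_mem_closedBall_inner_sub_eq y w hγ
  obtain ⟨x, hx, hwx⟩ := exists_inner_ge_of_mem_convexHull (hball hv) w
  refine ⟨x, hx, ?_⟩
  rw [← hvw, inner_sub_right, inner_sub_right]
  linarith

theorem exists_norm_add_sub_sq_le {s : Set E} {y : E} {γ D : ℝ} (hγ : 0 ≤ γ)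
    (hball : closedBall y γ ⊆ convexHull ℝ s) (hD : ∀ x ∈ s, ‖y - x‖ ≤ D) (w : E) :
    ∃ x ∈ s, ‖w + (y - x)‖ ^ 2 ≤ ‖w‖ ^ 2 - 2 * γ * ‖w‖ + D ^ 2 := by
  obtain ⟨x, hx, hwx⟩ := exists_inner_sub_ge_of_closedBall_subset_convexHull hγ hball w
  refine ⟨x, hx, ?_⟩
  have hyx : ‖y - x‖ ^ 2 ≤ D ^ 2 := pow_le_pow_left₀ (norm_nonneg _) (hD x hx) 2
  have hinner : ⟪w, y - x⟫ = -⟪w, x - y⟫ := by rw [← inner_neg_right, neg_sub]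
  rw [norm_add_sq_real, hinner]
  linarith

theorem norm_inv_smul_add_sub (y z p : E) {k : ℝ} (hk : 0 ≤ k) :
    ‖(k + 1)⁻¹ • (z + p) - y‖ = (k + 1)⁻¹ * ‖k • y - z + (y - p)‖ := by
  have hk1 : k + 1 ≠ 0 := by positivity
  have hrescale : (k + 1)⁻¹ • (z + p) - y = -(k + 1)⁻¹ • (k • y - z + (y - p)) := by
    nth_rewrite 1 [← inv_smul_smul₀ hk1 y]
    module
  rw [hrescale, norm_smul, norm_neg, Real.norm_eq_abs, abs_of_pos (by positivity)]

end

theorem greedy_residual_recursive_bound_general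
    (m N : ℕ)
    (Φ : Fin N → EuclideanSpace ℝ (Fin m)) (y : EuclideanSpace ℝ (Fin m))
    (ℓ : EuclideanSpace ℝ (Fin m) → ℝ)
    (hℓ : ∀ z, ℓ z = (1/2) * ‖z - y‖^2)
    (D : ℝ)
    (hD : ∀ u ∈ convexHull ℝ (Set.range Φ), ∀ v ∈ convexHull ℝ (Set.range Φ),
      ‖u - v‖ ≤ D)
    (γ : ℝ) (hγ : 0 < γ)
    (hball : Metric.closedBall y γ ⊆ convexHull ℝ (Set.range Φ))
    (z u w : ℕ → EuclideanSpace ℝ (Fin m))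
    (hgreedy : ∀ k : ℕ, ∃ j : Fin N, z (k + 1) = z k + Φ j ∧
      ∀ i : Fin N, ℓ (((k : ℝ) + 1)⁻¹ • (z k + Φ j)) ≤ ℓ (((k : ℝ) + 1)⁻¹ • (z k + Φ i)))
    (hw : ∀ k : ℕ, w k = (k : ℝ) • y - z k)
    (k : ℕ) (hk : 1 ≤ k) :
    ‖w k‖ ^ 2 ≤ ‖w (k - 1)‖ ^ 2 - 2 * γ * ‖w (k - 1)‖ + D ^ 2 := by
  obtain ⟨n, rfl⟩ : ∃ n, k = n + 1 := ⟨k - 1, by omega⟩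
  rw [Nat.add_sub_cancel]
  obtain ⟨j, hzj, hj⟩ := hgreedy n
  have hstep : w (n + 1) = w n + (y - Φ j) := by
    rw [hw, hw, hzj]
    push_cast
    module
  have hmin (i : Fin N) : ‖w (n + 1)‖ ≤ ‖w n + (y - Φ i)‖ := by
    have hji := hj i
    rw [hℓ, hℓ, mul_le_mul_iff_right₀ one_half_pos,
      pow_le_pow_iff_left₀ (norm_nonneg _) (norm_nonneg _) two_ne_zero,
      norm_inv_smul_add_sub _ _ _ n.cast_nonneg, norm_inv_smul_add_sub _ _ _ n.cast_nonneg,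
      mul_le_mul_iff_right₀ (by positivity), ← hw] at hji
    rwa [hstep]
  have hy : y ∈ convexHull ℝ (Set.range Φ) := hball (mem_closedBall_self hγ.le)
  obtain ⟨_, ⟨i, rfl⟩, hi⟩ := exists_norm_add_sub_sq_le hγ.le hball
    (fun x hx => hD y hy x (subset_convexHull ℝ _ hx)) (w n)
  calc ‖w (n + 1)‖ ^ 2 ≤ ‖w n + (y - Φ i)‖ ^ 2 := pow_le_pow_left₀ (norm_nonneg _) (hmin i) 2
    _ ≤ _ := hi

/-- **Recursive residual bound under the ball condition.**
If the closed ball `B(y, γ) ⊆ M_N` with `γ > 0` and `w_k = k·y − z_k`, then for every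
integer `k ≥ 1` the greedy forward selection iterates satisfy
`‖w_k‖² ≤ ‖w_{k−1}‖² − 2γ‖w_{k−1}‖ + D²`. -/
theorem greedy_residual_recursive_bound
    (m N : ℕ)
    (Φ : Fin N → EuclideanSpace ℝ (Fin m)) (y : EuclideanSpace ℝ (Fin m))
    (ℓ : EuclideanSpace ℝ (Fin m) → ℝ)
    (hℓ : ∀ z, ℓ z = (1/2) * ‖z - y‖^2)
    (D : ℝ) (hD0 : 0 ≤ D)
    (hD : ∀ u ∈ convexHull ℝ (Set.range Φ), ∀ v ∈ convexHull ℝ (Set.range Φ),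
      ‖u - v‖ ≤ D)
    (γ : ℝ) (hγ : 0 < γ)
    (hball : Metric.closedBall y γ ⊆ convexHull ℝ (Set.range Φ))
    (z u w : ℕ → EuclideanSpace ℝ (Fin m))
    (hz0 : z 0 = 0)
    (hgreedy : ∀ k : ℕ, ∃ j : Fin N, z (k + 1) = z k + Φ j ∧
      ∀ i : Fin N, ℓ (((k : ℝ) + 1)⁻¹ • (z k + Φ j)) ≤ ℓ (((k : ℝ) + 1)⁻¹ • (z k + Φ i)))
    (hu : ∀ k : ℕ, u (k + 1) = ((k : ℝ) + 1)⁻¹ • z (k + 1))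
    (hw : ∀ k : ℕ, w k = (k : ℝ) • y - z k)
    (k : ℕ) (hk : 1 ≤ k) :
    ‖w k‖ ^ 2 ≤ ‖w (k - 1)‖ ^ 2 - 2 * γ * ‖w (k - 1)‖ + D ^ 2 :=
  greedy_residual_recursive_bound_general m N Φ y ℓ hℓ D hD γ hγ hball z u w hgreedy hw k hk
end

section
/- Suppose γ > 0 and the closed Euclidean ball B(y, γ) = {v ∈ ℝ^m : ‖v − y‖ ≤ γ} is contained in M_N. Define w_k = k·y − z_k (so w_k = k(y − u_k) and w_0 = 0). Then for every integer k ≥ 0, the greedy forward selection iterates satisfy ‖w_k‖ ≤ max(D, D²/2, D²/(2γ)). -/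
/-!
With `w_{k+1} = w_k - (Φ_j - y)`, the greedy step picks the vertex minimising
`‖w_k - (Φ_i - y)‖`. Since the ball `B(y, γ)` lies in the hull, some vertex satisfies
`⟪w_k, Φ_i - y⟫ ≥ γ ‖w_k‖`, whence `‖w_{k+1}‖² ≤ ‖w_k‖² - 2γ‖w_k‖ + D²`. The right side is
convex in `‖w_k‖`, so it stays below `M²` on `[0, M]` as soon as `D ≤ M` and `D² ≤ 2γM`,
and the bound follows by induction on `k`.
-/

open Set Metric RealInnerProductSpace

section Greedy

variable {E ι : Type*} [NormedAddCommGroup E] [InnerProductSpace ℝ E]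

theorem exists_inner_le_of_mem_convexHull_range {Φ : ι → E} {x : E}
    (hx : x ∈ convexHull ℝ (range Φ)) (c : E) : ∃ i, ⟪c, x⟫ ≤ ⟪c, Φ i⟫ := by
  obtain ⟨_, ⟨i, rfl⟩, hi⟩ :=
    ((innerₛₗ ℝ c).convexOn convex_univ).exists_ge_of_mem_convexHull (subset_univ _) hx
  exact ⟨i, hi⟩

/-- The point `y + γ • w / ‖w‖` of the ball lies in the hull, so some `Φ i` is at least as far
in the direction `w`. -/
theorem exists_mul_norm_le_inner_sub_of_closedBall_subset {Φ : ι → E} {y : E} {γ : ℝ}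
    (hγ : 0 ≤ γ) (hball : closedBall y γ ⊆ convexHull ℝ (range Φ)) (w : E) :
    ∃ i, γ * ‖w‖ ≤ ⟪w, Φ i - y⟫ := by
  have hinner : ⟪w, (γ / ‖w‖) • w⟫ = γ * ‖w‖ := by
    rw [real_inner_smul_right, real_inner_self_eq_norm_sq]
    rcases eq_or_ne ‖w‖ 0 with h | h
    · simp [h]
    · field_simp
  have hmem : y + (γ / ‖w‖) • w ∈ closedBall y γ := by
    rw [mem_closedBall, dist_eq_norm, add_sub_cancel_left, norm_smul, Real.norm_eq_abs,
      abs_div, abs_norm, abs_of_nonneg hγ]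
    rcases eq_or_ne ‖w‖ 0 with h | h
    · simp [h, hγ]
    · rw [div_mul_cancel₀ _ h]
  obtain ⟨i, hi⟩ := exists_inner_le_of_mem_convexHull_range (hball hmem) w
  refine ⟨i, ?_⟩
  rw [inner_add_right, hinner] at hi
  rw [inner_sub_right]
  linarith

theorem norm_sub_sq_le_of_mul_norm_le_inner {w v : E} {γ D : ℝ} (hv : ‖v‖ ≤ D)
    (hwv : γ * ‖w‖ ≤ ⟪w, v⟫) : ‖w - v‖ ^ 2 ≤ ‖w‖ ^ 2 - 2 * γ * ‖w‖ + D ^ 2 := by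
  rw [norm_sub_sq_real]
  nlinarith [pow_le_pow_left₀ (norm_nonneg v) hv 2]

theorem sq_sub_mul_add_sq_le_sq {t γ D M : ℝ} (ht : 0 ≤ t) (htM : t ≤ M) (hD : 0 ≤ D)
    (hDM : D ≤ M) (hDγM : D ^ 2 ≤ 2 * γ * M) : t ^ 2 - 2 * γ * t + D ^ 2 ≤ M ^ 2 := by
  rcases (hD.trans hDM).eq_or_lt with rfl | hM
  · obtain rfl : t = 0 := le_antisymm htM ht
    obtain rfl : D = 0 := le_antisymm hDM hD
    simp
  -- the left side is convex in `t`, so it suffices to check `t = 0` and `t = M`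
  have hD2 : D ^ 2 ≤ M ^ 2 := pow_le_pow_left₀ hD hDM 2
  have hlin : 0 ≤ M * (M ^ 2 - D ^ 2 - t * M + 2 * γ * t) := by
    nlinarith [mul_nonneg (sub_nonneg.2 htM) (sub_nonneg.2 hD2), mul_nonneg ht (sub_nonneg.2 hDγM)]
  nlinarith [(mul_nonneg_iff_of_pos_left hM).1 hlin, mul_nonneg ht (sub_nonneg.2 htM)]

theorem norm_le_of_forall_norm_le_norm_sub_sub {Φ : ι → E} {y w w' : E} {γ D M : ℝ}
    (hγ : 0 ≤ γ) (hball : closedBall y γ ⊆ convexHull ℝ (range Φ)) (hΦ : ∀ i, ‖Φ i - y‖ ≤ D)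
    (hD : 0 ≤ D) (hDM : D ≤ M) (hDγM : D ^ 2 ≤ 2 * γ * M) (hw : ‖w‖ ≤ M)
    (hw' : ∀ i, ‖w'‖ ≤ ‖w - (Φ i - y)‖) : ‖w'‖ ≤ M := by
  obtain ⟨i, hi⟩ := exists_mul_norm_le_inner_sub_of_closedBall_subset hγ hball w
  refine (pow_le_pow_iff_left₀ (norm_nonneg _) (hD.trans hDM) two_ne_zero).1 ?_
  calc ‖w'‖ ^ 2 ≤ ‖w - (Φ i - y)‖ ^ 2 := pow_le_pow_left₀ (norm_nonneg _) (hw' i) 2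
    _ ≤ ‖w‖ ^ 2 - 2 * γ * ‖w‖ + D ^ 2 := norm_sub_sq_le_of_mul_norm_le_inner (hΦ i) hi
    _ ≤ M ^ 2 := sq_sub_mul_add_sq_le_sq (norm_nonneg w) hw hD hDM hDγM

theorem norm_inv_add_one_smul_sub {n : ℝ} (hn : 0 ≤ n) (y w v : E) :
    ‖(n + 1)⁻¹ • (n • y - w + v) - y‖ = (n + 1)⁻¹ * ‖w - (v - y)‖ := by
  have hn1 : n + 1 ≠ 0 := by positivity
  have h : (n + 1)⁻¹ • (n • y - w + v) - y = -((n + 1)⁻¹ • (w - (v - y))) := by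
    match_scalars <;> field_simp; ring
  rw [h, norm_neg, norm_smul, Real.norm_of_nonneg (by positivity)]

end Greedy

theorem greedy_residual_norm_bound_general
    (m N : ℕ)
    (Φ : Fin N → EuclideanSpace ℝ (Fin m)) (y : EuclideanSpace ℝ (Fin m))
    (ℓ : EuclideanSpace ℝ (Fin m) → ℝ)
    (hℓ : ∀ z, ℓ z = (1/2) * ‖z - y‖^2)
    (D : ℝ) (hD0 : 0 ≤ D)
    (hD : ∀ u ∈ convexHull ℝ (Set.range Φ), ∀ v ∈ convexHull ℝ (Set.range Φ),
      ‖u - v‖ ≤ D)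
    (γ : ℝ) (hγ : 0 < γ)
    (hball : Metric.closedBall y γ ⊆ convexHull ℝ (Set.range Φ))
    (z u w : ℕ → EuclideanSpace ℝ (Fin m))
    (hz0 : z 0 = 0)
    (hgreedy : ∀ k : ℕ, ∃ j : Fin N, z (k + 1) = z k + Φ j ∧
      ∀ i : Fin N, ℓ (((k : ℝ) + 1)⁻¹ • (z k + Φ j)) ≤ ℓ (((k : ℝ) + 1)⁻¹ • (z k + Φ i)))
    (hw : ∀ k : ℕ, w k = (k : ℝ) • y - z k) :
    ∀ k : ℕ, ‖w k‖ ≤ max D (max (D ^ 2 / 2) (D ^ 2 / (2 * γ))) := by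
  have hy : y ∈ convexHull ℝ (range Φ) := hball (mem_closedBall_self hγ.le)
  have hΦ : ∀ i, ‖Φ i - y‖ ≤ D := fun i => hD _ (subset_convexHull ℝ _ ⟨i, rfl⟩) _ hy
  set M := max D (max (D ^ 2 / 2) (D ^ 2 / (2 * γ)))
  have hDM : D ≤ M := le_max_left _ _
  have hDγM : D ^ 2 ≤ 2 * γ * M := by
    have h : D ^ 2 / (2 * γ) ≤ M := (le_max_right _ _).trans (le_max_right _ _)
    rwa [div_le_iff₀ (by positivity), mul_comm] at h
  intro k
  induction k with
  | zero => simpa [hw, hz0] using hD0.trans hDM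
  | succ k ih =>
    obtain ⟨j, hj, hopt⟩ := hgreedy k
    have hz : z k = (k : ℝ) • y - w k := by rw [hw]; abel
    have hwj : w (k + 1) = w k - (Φ j - y) := by
      rw [hw, hw, hj]; push_cast; module
    -- the loss of `(k + 1)⁻¹ • (z k + Φ i)` is `½ ((k + 1)⁻¹ ‖w k - (Φ i - y)‖)²`
    have hmin : ∀ i, ‖w (k + 1)‖ ≤ ‖w k - (Φ i - y)‖ := fun i => by
      have h := hopt i
      rw [hℓ, hℓ, hz, norm_inv_add_one_smul_sub k.cast_nonneg,
        norm_inv_add_one_smul_sub k.cast_nonneg] at h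
      rw [hwj]
      have hc : (0 : ℝ) < ((k : ℝ) + 1)⁻¹ := by positivity
      have hsq := (pow_le_pow_iff_left₀ (by positivity) (by positivity) two_ne_zero).1
        (le_of_mul_le_mul_left h (by norm_num))
      exact le_of_mul_le_mul_left hsq hc
    exact norm_le_of_forall_norm_le_norm_sub_sub hγ.le hball hΦ hD0 hDM hDγM ih hmin

/-- **Residual norm bound under the ball condition.**
If the closed ball `B(y, γ) ⊆ M_N` with `γ > 0` and `w_k = k·y − z_k`, then for every
integer `k ≥ 0` the greedy forward selection iterates satisfy
`‖w_k‖ ≤ max(D, D²/2, D²/(2γ))`. -/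
theorem greedy_residual_norm_bound
    (m N : ℕ)
    (Φ : Fin N → EuclideanSpace ℝ (Fin m)) (y : EuclideanSpace ℝ (Fin m))
    (ℓ : EuclideanSpace ℝ (Fin m) → ℝ)
    (hℓ : ∀ z, ℓ z = (1/2) * ‖z - y‖^2)
    (D : ℝ) (hD0 : 0 ≤ D)
    (hD : ∀ u ∈ convexHull ℝ (Set.range Φ), ∀ v ∈ convexHull ℝ (Set.range Φ),
      ‖u - v‖ ≤ D)
    (γ : ℝ) (hγ : 0 < γ)
    (hball : Metric.closedBall y γ ⊆ convexHull ℝ (Set.range Φ))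
    (z u w : ℕ → EuclideanSpace ℝ (Fin m))
    (hz0 : z 0 = 0)
    (hgreedy : ∀ k : ℕ, ∃ j : Fin N, z (k + 1) = z k + Φ j ∧
      ∀ i : Fin N, ℓ (((k : ℝ) + 1)⁻¹ • (z k + Φ j)) ≤ ℓ (((k : ℝ) + 1)⁻¹ • (z k + Φ i)))
    (hu : ∀ k : ℕ, u (k + 1) = ((k : ℝ) + 1)⁻¹ • z (k + 1))
    (hw : ∀ k : ℕ, w k = (k : ℝ) • y - z k) :
    ∀ k : ℕ, ‖w k‖ ≤ max D (max (D ^ 2 / 2) (D ^ 2 / (2 * γ))) :=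
  greedy_residual_norm_bound_general m N Φ y ℓ hℓ D hD0 hD γ hγ hball z u w hz0 hgreedy hw
end

section
/- Suppose γ > 0 and the closed Euclidean ball B(y, γ) = {v ∈ ℝ^m : ‖v − y‖ ≤ γ} is contained in M_N. Then for every integer k ≥ 1, the greedy forward selection iterates satisfy ℓ(u_k) ≤ max(D, D²/2, D²/(2γ))² / (2k²); in particular ℓ(u_k) = O(1/(k² · min(1, γ)²)). (Faster O(1/k²) rate, Lemma A.6 of the paper.) -/
/-!
Track the residual `r n = z n - n • y = n • (u n - y)`. The greedy step minimises
`‖r n + (Φ i - y)‖` over `i`, and because `B(y, γ) ⊆ M_N` some vertex satisfies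
`⟪r n, Φ i - y⟫ ≤ -γ ‖r n‖`; hence `‖r (n+1)‖² ≤ ‖r n‖² - 2γ ‖r n‖ + D²`, which keeps `‖r n‖ ≤ C`
for `C = max(D, D²/2, D²/(2γ))`. Finally `ℓ(u k) = ‖r k‖² / (2k²)`.
-/

/-- If `t ≤ 2γ` the middle terms are nonpositive; otherwise `t² - 2γt ≤ C (t - 2γ)` and
`D² ≤ 2γC` absorbs the rest. -/
lemma sq_sub_mul_add_sq_le {t γ D C : ℝ} (ht : 0 ≤ t) (htC : t ≤ C) (hD : 0 ≤ D) (hDC : D ≤ C)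
    (hDγ : D ^ 2 ≤ 2 * γ * C) :
    t ^ 2 - 2 * γ * t + D ^ 2 ≤ C ^ 2 := by
  rcases le_or_gt t (2 * γ) with h | h
  · nlinarith [mul_nonneg ht (sub_nonneg.mpr h)]
  · nlinarith [mul_le_mul_of_nonneg_right htC (sub_nonneg.mpr h.le)]

open RealInnerProductSpace

section

variable {E : Type*} [NormedAddCommGroup E] [InnerProductSpace ℝ E]

/-- Minimise the linear functional `⟪r, ·⟫` over the hull, which contains `y - γ • r / ‖r‖`. -/
lemma exists_inner_le_inner_sub_of_closedBall_subset_convexHull {s : Set E} {y : E} {γ : ℝ}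
    (hγ : 0 ≤ γ) (hball : Metric.closedBall y γ ⊆ convexHull ℝ s) (r : E) :
    ∃ p ∈ s, ⟪r, p⟫ ≤ ⟪r, y⟫ - γ * ‖r‖ := by
  have hmin : ∀ v ∈ Metric.closedBall y γ, ∃ p ∈ s, ⟪r, p⟫ ≤ ⟪r, v⟫ := fun v hv =>
    (innerSL ℝ r).toLinearMap.concaveOn (convex_convexHull ℝ s)
      |>.exists_le_of_mem_convexHull (subset_convexHull ℝ s) (hball hv)
  rcases eq_or_ne r 0 with rfl | hr
  · simpa using hmin y (Metric.mem_closedBall_self hγ)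
  have hr' : 0 < ‖r‖ := norm_pos_iff.mpr hr
  have hv : y - (γ / ‖r‖) • r ∈ Metric.closedBall y γ := by
    rw [Metric.mem_closedBall, dist_eq_norm, sub_sub_cancel_left, norm_neg, norm_smul,
      Real.norm_of_nonneg (div_nonneg hγ hr'.le), div_mul_cancel₀ _ hr'.ne']
  obtain ⟨p, hp, hpv⟩ := hmin _ hv
  refine ⟨p, hp, hpv.trans_eq ?_⟩
  rw [inner_sub_right, real_inner_smul_right, real_inner_self_eq_norm_sq]
  field_simp

lemma sq_norm_add_sub_le_of_greedy {s : Set E} {y q r : E} {γ D : ℝ} (hγ : 0 ≤ γ)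
    (hball : Metric.closedBall y γ ⊆ convexHull ℝ s) (hdiam : ∀ p ∈ s, ‖p - y‖ ≤ D)
    (hq : ∀ p ∈ s, ‖r + (q - y)‖ ≤ ‖r + (p - y)‖) :
    ‖r + (q - y)‖ ^ 2 ≤ ‖r‖ ^ 2 - 2 * γ * ‖r‖ + D ^ 2 := by
  obtain ⟨p, hp, hpr⟩ := exists_inner_le_inner_sub_of_closedBall_subset_convexHull hγ hball r
  have hpD : ‖p - y‖ ^ 2 ≤ D ^ 2 := pow_le_pow_left₀ (norm_nonneg _) (hdiam p hp) 2
  calc ‖r + (q - y)‖ ^ 2 ≤ ‖r + (p - y)‖ ^ 2 := pow_le_pow_left₀ (norm_nonneg _) (hq p hp) 2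
    _ = ‖r‖ ^ 2 + 2 * (⟪r, p⟫ - ⟪r, y⟫) + ‖p - y‖ ^ 2 := by
      rw [norm_add_sq_real, inner_sub_right]
    _ ≤ ‖r‖ ^ 2 - 2 * γ * ‖r‖ + D ^ 2 := by linarith

lemma norm_sub_smul_le_of_greedy {s : Set E} {y : E} {γ D C : ℝ} (hγ : 0 ≤ γ)
    (hball : Metric.closedBall y γ ⊆ convexHull ℝ s) (hdiam : ∀ p ∈ s, ‖p - y‖ ≤ D)
    (hD : 0 ≤ D) (hDC : D ≤ C) (hDγ : D ^ 2 ≤ 2 * γ * C) {z : ℕ → E} (hz0 : z 0 = 0)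
    (hstep : ∀ n : ℕ, ∃ q ∈ s, z (n + 1) = z n + q ∧
      ∀ p ∈ s, ‖z n + q - ((n : ℝ) + 1) • y‖ ≤ ‖z n + p - ((n : ℝ) + 1) • y‖)
    (n : ℕ) : ‖z n - (n : ℝ) • y‖ ≤ C := by
  induction n with
  | zero => simpa [hz0] using hD.trans hDC
  | succ n ih =>
    obtain ⟨q, -, hzq, hq⟩ := hstep n
    have hsplit : ∀ p : E, z n + p - ((n : ℝ) + 1) • y = (z n - (n : ℝ) • y) + (p - y) := by
      intro p; rw [add_smul, one_smul]; abel
    simp only [hsplit] at hq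
    have hsq := sq_norm_add_sub_le_of_greedy hγ hball hdiam hq
    rw [Nat.cast_succ, hzq, hsplit]
    exact (pow_le_pow_iff_left₀ (norm_nonneg _) (hD.trans hDC) two_ne_zero).1 <|
      hsq.trans (sq_sub_mul_add_sq_le (norm_nonneg _) ih hD hDC hDγ)

lemma half_mul_sq_norm_inv_smul_sub {c : ℝ} (hc : 0 < c) (w y : E) :
    1 / 2 * ‖c⁻¹ • w - y‖ ^ 2 = ‖w - c • y‖ ^ 2 / (2 * c ^ 2) := by
  rw [← inv_smul_smul₀ hc.ne' y, ← smul_sub, norm_smul, smul_inv_smul₀ hc.ne',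
    Real.norm_of_nonneg (inv_nonneg.mpr hc.le)]
  field_simp

end

theorem greedy_faster_rate_general
    (m N : ℕ)
    (Φ : Fin N → EuclideanSpace ℝ (Fin m)) (y : EuclideanSpace ℝ (Fin m))
    (ℓ : EuclideanSpace ℝ (Fin m) → ℝ)
    (hℓ : ∀ z, ℓ z = (1/2) * ‖z - y‖^2)
    (D : ℝ)
    (hD : ∀ u ∈ convexHull ℝ (Set.range Φ), ∀ v ∈ convexHull ℝ (Set.range Φ),
      ‖u - v‖ ≤ D)
    (γ : ℝ) (hγ : 0 < γ)
    (hball : Metric.closedBall y γ ⊆ convexHull ℝ (Set.range Φ))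
    (z u : ℕ → EuclideanSpace ℝ (Fin m))
    (hz0 : z 0 = 0)
    (hgreedy : ∀ k : ℕ, ∃ j : Fin N, z (k + 1) = z k + Φ j ∧
      ∀ i : Fin N, ℓ (((k : ℝ) + 1)⁻¹ • (z k + Φ j)) ≤ ℓ (((k : ℝ) + 1)⁻¹ • (z k + Φ i)))
    (hu : ∀ k : ℕ, u (k + 1) = ((k : ℝ) + 1)⁻¹ • z (k + 1))
    (k : ℕ) (hk : 1 ≤ k) :
    ℓ (u k) ≤ (max D (max (D ^ 2 / 2) (D ^ 2 / (2 * γ)))) ^ 2 / (2 * (k : ℝ) ^ 2) := by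
  set C := max D (max (D ^ 2 / 2) (D ^ 2 / (2 * γ)))
  have hy : y ∈ convexHull ℝ (Set.range Φ) := hball (Metric.mem_closedBall_self hγ.le)
  have hDγ : D ^ 2 ≤ 2 * γ * C :=
    (div_le_iff₀' (by positivity)).1 ((le_max_right _ _).trans (le_max_right _ _))
  have hℓ' : ∀ (n : ℕ) w, ℓ (((n : ℝ) + 1)⁻¹ • w) =
      ‖w - ((n : ℝ) + 1) • y‖ ^ 2 / (2 * ((n : ℝ) + 1) ^ 2) := fun n w => by
    rw [hℓ, half_mul_sq_norm_inv_smul_sub (by positivity)]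
  have hstep : ∀ n : ℕ, ∃ q ∈ Set.range Φ, z (n + 1) = z n + q ∧ ∀ p ∈ Set.range Φ,
      ‖z n + q - ((n : ℝ) + 1) • y‖ ≤ ‖z n + p - ((n : ℝ) + 1) • y‖ := fun n => by
    obtain ⟨j, hzj, hj⟩ := hgreedy n
    refine ⟨Φ j, Set.mem_range_self j, hzj, Set.forall_mem_range.2 fun i => ?_⟩
    have hi := hj i
    rwa [hℓ', hℓ', div_le_div_iff_of_pos_right (by positivity),
      pow_le_pow_iff_left₀ (norm_nonneg _) (norm_nonneg _) two_ne_zero] at hi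
  have hbound := norm_sub_smul_le_of_greedy hγ.le hball
    (fun p hp => hD p (subset_convexHull ℝ _ hp) y hy) ((norm_nonneg _).trans (hD y hy y hy))
    (le_max_left _ _) hDγ hz0 hstep
  obtain ⟨n, rfl⟩ := Nat.exists_eq_add_of_le' hk
  rw [hu, hℓ', ← Nat.cast_succ]
  gcongr
  exact hbound (n + 1)

/-- **Faster `O(1/k²)` rate under the ball condition (Lemma A.6).**
If the closed ball `B(y, γ) ⊆ M_N` with `γ > 0`, then for every integer `k ≥ 1`,
the greedy forward selection iterates satisfy
`ℓ(u_k) ≤ max(D, D²/2, D²/(2γ))² / (2k²)`. -/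
theorem greedy_faster_rate
    (m N : ℕ)
    (Φ : Fin N → EuclideanSpace ℝ (Fin m)) (y : EuclideanSpace ℝ (Fin m))
    (ℓ : EuclideanSpace ℝ (Fin m) → ℝ)
    (hℓ : ∀ z, ℓ z = (1/2) * ‖z - y‖^2)
    (D : ℝ) (hD0 : 0 ≤ D)
    (hD : ∀ u ∈ convexHull ℝ (Set.range Φ), ∀ v ∈ convexHull ℝ (Set.range Φ),
      ‖u - v‖ ≤ D)
    (γ : ℝ) (hγ : 0 < γ)
    (hball : Metric.closedBall y γ ⊆ convexHull ℝ (Set.range Φ))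
    (z u : ℕ → EuclideanSpace ℝ (Fin m))
    (hz0 : z 0 = 0)
    (hgreedy : ∀ k : ℕ, ∃ j : Fin N, z (k + 1) = z k + Φ j ∧
      ∀ i : Fin N, ℓ (((k : ℝ) + 1)⁻¹ • (z k + Φ j)) ≤ ℓ (((k : ℝ) + 1)⁻¹ • (z k + Φ i)))
    (hu : ∀ k : ℕ, u (k + 1) = ((k : ℝ) + 1)⁻¹ • z (k + 1))
    (k : ℕ) (hk : 1 ≤ k) :
    ℓ (u k) ≤ (max D (max (D ^ 2 / 2) (D ^ 2 / (2 * γ)))) ^ 2 / (2 * (k : ℝ) ^ 2) :=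
  greedy_faster_rate_general m N Φ y ℓ hℓ D hD γ hγ hball z u hz0 hgreedy hu k hk
end
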